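/- arXiv:2504.01703 — 5 statements merged into one kernel-verified Lean document; each statement's English description precedes it below -/
import Mathlib

section
/- Let v, f, s : S → ℝ≥0 be measurable with (Pv)(x) ≤ v(x) − f(x) + s(x) for all x in S, where P is the transition kernel of a Markov chain (X_n). Then for any stopping time τ (with respect to the natural filtration) and any n, E_x[∑_{i=0}^{(τ∧n)−1} f(X_i)] ≤ v(x) + E_x[∑_{i=0}^{(τ∧n)−1} s(X_i)]. -/
open MeasureTheory ProbabilityTheory
open scoped ENNReal

/-!
With `M m = v (X (τ ∧ m)) + ∑_{i < τ ∧ m} f (X i)`, the Markov property and the drift inequality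
give `E M (m + 1) ≤ E M m + E [s (X m); m < τ]`, since on `{τ ≤ m}` nothing changes and
`{m < τ}` is `ℱ m`-measurable. Summing these from `E M 0 = v x` gives the bound. Everything lives
in `ℝ≥0∞` and nothing is ever subtracted, so no integrability assumption is needed.
-/

def naturalFiltration {Ω S : Type*} [mΩ : MeasurableSpace Ω] [MeasurableSpace S]
    (X : ℕ → Ω → S) (hX : ∀ n, Measurable (X n)) : MeasureTheory.Filtration ℕ mΩ where
  seq n := ⨆ i ∈ Set.Iic n, MeasurableSpace.comap (X i) inferInstance
  mono' := fun n m hnm => by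
    exact iSup_le fun i => iSup_le fun hi =>
      le_iSup₂ (f := fun i (_ : i ∈ Set.Iic m) => MeasurableSpace.comap (X i) inferInstance)
        i (le_trans hi hnm)
  le' := fun n => by
    exact iSup_le fun i => iSup_le fun _ => (hX i).comap_le

open Finset

theorem sum_range_min_succ {M : Type*} [AddCommMonoid M] (g : ℕ → M) (t m : ℕ) :
    ∑ i ∈ range (min t (m + 1)), g i = ∑ i ∈ range (min t m), g i + if m < t then g m else 0 := by
  split_ifs with hm
  · rw [min_eq_right hm, min_eq_right hm.le, sum_range_succ]
  · have hm : t ≤ m := not_lt.mp hm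
    rw [min_eq_left hm, min_eq_left (hm.trans m.le_succ), add_zero]

/-- The Markov property `μ[g (X (n + 1)) | ℱ n] = P g (X n)`, tested on `ℱ n`-measurable sets. -/
def IsMarkovChain {Ω S : Type*} {mΩ : MeasurableSpace Ω} [MeasurableSpace S] (μ : Measure Ω)
    (P : Kernel S S) (ℱ : Filtration ℕ mΩ) (X : ℕ → Ω → S) : Prop :=
  ∀ (n : ℕ) (g : S → ℝ≥0∞), Measurable g → ∀ A : Set Ω, MeasurableSet[ℱ n] A →
    ∫⁻ ω in A, g (X (n + 1) ω) ∂μ = ∫⁻ ω in A, (∫⁻ y, g y ∂(P (X n ω))) ∂μ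

section Drift

variable {Ω S : Type*} {mΩ : MeasurableSpace Ω} [MeasurableSpace S] {μ : Measure Ω}
  {P : Kernel S S} {ℱ : Filtration ℕ mΩ} {X : ℕ → Ω → S} {v f s : S → ℝ≥0∞}

theorem MeasureTheory.IsStoppingTime.measurableSet_nat_lt {τ : Ω → ℕ}
    (hτ : IsStoppingTime ℱ fun ω => (τ ω : WithTop ℕ)) (m : ℕ) :
    MeasurableSet[ℱ m] {ω | m < τ ω} := by
  convert (hτ m).compl using 1
  ext ω
  simp

theorem IsMarkovChain.setLIntegral_drift_le (hMarkov : IsMarkovChain μ P ℱ X)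
    (hX : ∀ n, Measurable (X n)) (hv : Measurable v) (hs : Measurable s)
    (hdrift : ∀ y, (∫⁻ z, v z ∂(P y)) + f y ≤ v y + s y)
    {m : ℕ} {A : Set Ω} (hA : MeasurableSet[ℱ m] A) (h : Ω → ℝ≥0∞) :
    ∫⁻ ω in A, (v (X (m + 1) ω) + (h ω + f (X m ω))) ∂μ
      ≤ ∫⁻ ω in A, (v (X m ω) + h ω) ∂μ + ∫⁻ ω in A, s (X m ω) ∂μ := by
  have hvX : Measurable fun ω => v (X (m + 1) ω) := hv.comp (hX (m + 1))
  have hPvX : Measurable fun ω => ∫⁻ z, v z ∂(P (X m ω)) := hv.lintegral_kernel.comp (hX m)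
  calc ∫⁻ ω in A, (v (X (m + 1) ω) + (h ω + f (X m ω))) ∂μ
      = ∫⁻ ω in A, ((∫⁻ z, v z ∂(P (X m ω))) + (h ω + f (X m ω))) ∂μ := by
        rw [lintegral_add_left hvX, lintegral_add_left hPvX, hMarkov m v hv A hA]
    _ ≤ ∫⁻ ω in A, (v (X m ω) + h ω + s (X m ω)) ∂μ := by
        refine lintegral_mono fun ω => ?_
        calc (∫⁻ z, v z ∂(P (X m ω))) + (h ω + f (X m ω))
            = (∫⁻ z, v z ∂(P (X m ω))) + f (X m ω) + h ω := by ring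
          _ ≤ v (X m ω) + s (X m ω) + h ω := add_le_add_left (hdrift _) _
          _ = v (X m ω) + h ω + s (X m ω) := by ring
    _ = ∫⁻ ω in A, (v (X m ω) + h ω) ∂μ + ∫⁻ ω in A, s (X m ω) ∂μ :=
        lintegral_add_right _ (hs.comp (hX m))

theorem IsMarkovChain.lintegral_stopped_lyapunov_succ_le (hMarkov : IsMarkovChain μ P ℱ X)
    (hX : ∀ n, Measurable (X n)) (hv : Measurable v) (hs : Measurable s)
    (hdrift : ∀ y, (∫⁻ z, v z ∂(P y)) + f y ≤ v y + s y)
    {τ : Ω → ℕ} (hτ : IsStoppingTime ℱ fun ω => (τ ω : WithTop ℕ)) (m : ℕ) :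
    ∫⁻ ω, (v (X (min (τ ω) (m + 1)) ω) + ∑ i ∈ range (min (τ ω) (m + 1)), f (X i ω)) ∂μ
      ≤ ∫⁻ ω, (v (X (min (τ ω) m) ω) + ∑ i ∈ range (min (τ ω) m), f (X i ω)) ∂μ
        + ∫⁻ ω in {ω | m < τ ω}, s (X m ω) ∂μ := by
  set A := {ω | m < τ ω}
  have hAℱ : MeasurableSet[ℱ m] A := hτ.measurableSet_nat_lt m
  have hA : MeasurableSet A := ℱ.le m _ hAℱ
  set F : ℕ → Ω → ℝ≥0∞ := fun k ω => ∑ i ∈ range (min (τ ω) k), f (X i ω)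
  have hF : ∀ ω, F (m + 1) ω = F m ω + if m < τ ω then f (X m ω) else 0 := fun ω =>
    sum_range_min_succ (fun i => f (X i ω)) (τ ω) m
  have succ_on_A : ∀ ω ∈ A, v (X (min (τ ω) (m + 1)) ω) + F (m + 1) ω
      = v (X (m + 1) ω) + (F m ω + f (X m ω)) := fun ω (hω : m < τ ω) => by
    rw [hF, if_pos hω, min_eq_right hω]
  have on_A : ∀ ω ∈ A, v (X (min (τ ω) m) ω) + F m ω = v (X m ω) + F m ω :=
    fun ω (hω : m < τ ω) => by rw [min_eq_right hω.le]
  have succ_off_A : ∀ ω ∈ Aᶜ, v (X (min (τ ω) (m + 1)) ω) + F (m + 1) ω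
      = v (X (min (τ ω) m) ω) + F m ω := fun ω (hω : ¬ m < τ ω) => by
    have hτm : τ ω ≤ m := not_lt.mp hω
    rw [hF, if_neg hω, add_zero, min_eq_left hτm, min_eq_left (hτm.trans m.le_succ)]
  calc ∫⁻ ω, (v (X (min (τ ω) (m + 1)) ω) + F (m + 1) ω) ∂μ
      = ∫⁻ ω in A, (v (X (m + 1) ω) + (F m ω + f (X m ω))) ∂μ
        + ∫⁻ ω in Aᶜ, (v (X (min (τ ω) m) ω) + F m ω) ∂μ := by
        rw [← lintegral_add_compl _ hA, setLIntegral_congr_fun hA succ_on_A,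
          setLIntegral_congr_fun hA.compl succ_off_A]
    _ ≤ ∫⁻ ω in A, (v (X m ω) + F m ω) ∂μ + ∫⁻ ω in A, s (X m ω) ∂μ
        + ∫⁻ ω in Aᶜ, (v (X (min (τ ω) m) ω) + F m ω) ∂μ := by
        gcongr
        exact hMarkov.setLIntegral_drift_le hX hv hs hdrift hAℱ (F m)
    _ = ∫⁻ ω, (v (X (min (τ ω) m) ω) + F m ω) ∂μ + ∫⁻ ω in A, s (X m ω) ∂μ := by
        rw [← setLIntegral_congr_fun hA on_A, add_right_comm, lintegral_add_compl _ hA]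

theorem IsMarkovChain.lintegral_stopped_lyapunov_le (hMarkov : IsMarkovChain μ P ℱ X)
    (hX : ∀ n, Measurable (X n)) (hv : Measurable v) (hs : Measurable s)
    (hdrift : ∀ y, (∫⁻ z, v z ∂(P y)) + f y ≤ v y + s y)
    {τ : Ω → ℕ} (hτ : IsStoppingTime ℱ fun ω => (τ ω : WithTop ℕ)) (m : ℕ) :
    ∫⁻ ω, (v (X (min (τ ω) m) ω) + ∑ i ∈ range (min (τ ω) m), f (X i ω)) ∂μ
      ≤ ∫⁻ ω, v (X 0 ω) ∂μ + ∫⁻ ω, ∑ i ∈ range (min (τ ω) m), s (X i ω) ∂μ := by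
  induction m with
  | zero => simp
  | succ m ih =>
    set A := {ω | m < τ ω}
    have hA : MeasurableSet A := ℱ.le m _ (hτ.measurableSet_nat_lt m)
    have hS : ∀ ω, ∑ i ∈ range (min (τ ω) m), s (X i ω) + A.indicator (fun ω => s (X m ω)) ω
        = ∑ i ∈ range (min (τ ω) (m + 1)), s (X i ω) := fun ω => by
      simp only [sum_range_min_succ, Set.indicator_apply, A, Set.mem_ofPred_eq]
    calc _ ≤ ∫⁻ ω, (v (X (min (τ ω) m) ω) + ∑ i ∈ range (min (τ ω) m), f (X i ω)) ∂μ
            + ∫⁻ ω in A, s (X m ω) ∂μ :=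
          hMarkov.lintegral_stopped_lyapunov_succ_le hX hv hs hdrift hτ m
      _ ≤ ∫⁻ ω, v (X 0 ω) ∂μ + (∫⁻ ω, ∑ i ∈ range (min (τ ω) m), s (X i ω) ∂μ
            + ∫⁻ ω, A.indicator (fun ω => s (X m ω)) ω ∂μ) := by
          rw [lintegral_indicator hA, ← add_assoc]
          gcongr
      _ ≤ _ := by
          gcongr
          exact (le_lintegral_add _ _).trans_eq (lintegral_congr hS)

end Drift

theorem comparison_theorem_stopping_time_general
    {Ω S : Type*} [MeasurableSpace Ω] [MeasurableSpace S]
    (μ : Measure Ω) [IsProbabilityMeasure μ]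
    (P : Kernel S S)
    (X : ℕ → Ω → S) (hX : ∀ n, Measurable (X n))
    (x : S) (hstart : ∀ᵐ ω ∂μ, X 0 ω = x)
    (hMarkov : ∀ (n : ℕ) (g : S → ℝ≥0∞), Measurable g →
      ∀ A : Set Ω, MeasurableSet[(naturalFiltration X hX) n] A →
        ∫⁻ ω in A, g (X (n + 1) ω) ∂μ = ∫⁻ ω in A, (∫⁻ y, g y ∂(P (X n ω))) ∂μ)
    (v f s : S → ℝ≥0∞) (hv : Measurable v) (hs : Measurable s)
    (hdrift : ∀ y, (∫⁻ z, v z ∂(P y)) + f y ≤ v y + s y)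
    (τ : Ω → ℕ) (hτ : IsStoppingTime (naturalFiltration X hX) (fun ω => (τ ω : WithTop ℕ))) (n : ℕ) :
    ∫⁻ ω, ∑ i ∈ Finset.range (min (τ ω) n), f (X i ω) ∂μ
      ≤ v x + ∫⁻ ω, ∑ i ∈ Finset.range (min (τ ω) n), s (X i ω) ∂μ := by
  have hv₀ : ∫⁻ ω, v (X 0 ω) ∂μ = v x := by
    rw [lintegral_congr_ae (hstart.mono fun ω hω => by rw [hω]), lintegral_const, measure_univ,
      mul_one]
  calc _ ≤ ∫⁻ ω, (v (X (min (τ ω) n) ω) + ∑ i ∈ range (min (τ ω) n), f (X i ω)) ∂μ :=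
        lintegral_mono fun ω => le_add_self
    _ ≤ _ := hv₀ ▸ IsMarkovChain.lintegral_stopped_lyapunov_le hMarkov hX hv hs hdrift hτ n

/-- Generalized Comparison Theorem: if `Pv + f ≤ v + s` pointwise (i.e. the drift
inequality `Pv ≤ v - f + s` for nonnegative `v, f, s`), then for a Markov chain `X`
started at `x` and any stopping time `τ` for the natural filtration,
`E_x ∑_{i<τ∧n} f(X_i) ≤ v(x) + E_x ∑_{i<τ∧n} s(X_i)` for every `n`. -/
theorem comparison_theorem_stopping_time
    {Ω S : Type*} [MeasurableSpace Ω] [MeasurableSpace S]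
    (μ : Measure Ω) [IsProbabilityMeasure μ]
    (P : Kernel S S) [IsMarkovKernel P]
    (X : ℕ → Ω → S) (hX : ∀ n, Measurable (X n))
    (x : S) (hstart : ∀ᵐ ω ∂μ, X 0 ω = x)
    (hMarkov : ∀ (n : ℕ) (g : S → ℝ≥0∞), Measurable g →
      ∀ A : Set Ω, MeasurableSet[(naturalFiltration X hX) n] A →
        ∫⁻ ω in A, g (X (n + 1) ω) ∂μ = ∫⁻ ω in A, (∫⁻ y, g y ∂(P (X n ω))) ∂μ)
    (v f s : S → ℝ≥0∞) (hv : Measurable v) (hf : Measurable f) (hs : Measurable s)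
    (hdrift : ∀ y, (∫⁻ z, v z ∂(P y)) + f y ≤ v y + s y)
    (τ : Ω → ℕ) (hτ : IsStoppingTime (naturalFiltration X hX) (fun ω => (τ ω : WithTop ℕ))) (n : ℕ) :
    ∫⁻ ω, ∑ i ∈ Finset.range (min (τ ω) n), f (X i ω) ∂μ
      ≤ v x + ∫⁻ ω, ∑ i ∈ Finset.range (min (τ ω) n), s (X i ω) ∂μ :=
  comparison_theorem_stopping_time_general μ P X hX x hstart hMarkov v f s hv hs hdrift τ hτ n
end

section
/- More generally with an m-step minorization: if (Pv)(x) ≤ v(x) + b for all x ∈ S and P^m(x,·) ≥ λφ(·) for x ∈ C with x₀ ∈ C, then φv ≤ (v(x₀) + m·b)/λ. -/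
open MeasureTheory ProbabilityTheory
open scoped ENNReal NNReal

/-!
Iterating the drift condition gives `P^m v (x₀) ≤ v(x₀) + m b`, while the minorization at `x₀`
gives `λ · φ v ≤ P^m v (x₀)`.
-/

/-- The `n`-fold iterate `P^n` of a Markov kernel. -/
noncomputable def kernelIter {S : Type*} [MeasurableSpace S] (P : Kernel S S) : ℕ → Kernel S S
  | 0 => Kernel.id
  | n + 1 => (kernelIter P n).comp P

section

variable {S : Type*} [MeasurableSpace S] (P : Kernel S S)

lemma kernelIter_zero_apply (x : S) : kernelIter P 0 x = Measure.dirac x := by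
  rw [kernelIter, Kernel.id_apply]

lemma kernelIter_succ_apply (n : ℕ) (x : S) :
    kernelIter P (n + 1) x = (P x).bind (kernelIter P n) := by
  rw [kernelIter, Kernel.comp_apply]

lemma lintegral_kernelIter_le_add_mul [IsMarkovKernel P] {f : S → ℝ≥0∞} (hf : Measurable f)
    {b : ℝ≥0∞} (hdrift : ∀ x, ∫⁻ y, f y ∂(P x) ≤ f x + b) (n : ℕ) (x : S) :
    ∫⁻ y, f y ∂(kernelIter P n x) ≤ f x + n * b := by
  induction n generalizing x with
  | zero => simp [kernelIter_zero_apply, lintegral_dirac' x hf]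
  | succ n ih =>
    rw [kernelIter_succ_apply, Measure.lintegral_bind (kernelIter P n).aemeasurable hf.aemeasurable]
    calc ∫⁻ z, ∫⁻ y, f y ∂(kernelIter P n z) ∂(P x)
        ≤ ∫⁻ z, (f z + n * b) ∂(P x) := lintegral_mono fun z => ih z
      _ = ∫⁻ z, f z ∂(P x) + n * b := by
          rw [lintegral_add_right _ measurable_const, lintegral_const, measure_univ, mul_one]
      _ ≤ f x + b + n * b := by gcongr; exact hdrift x
      _ = f x + (n + 1 : ℕ) * b := by push_cast; ring

end

lemma mul_lintegral_le_of_smul_le {S : Type*} [MeasurableSpace S] {φ μ : Measure S} {l : ℝ≥0∞}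
    (h : l • φ ≤ μ) (f : S → ℝ≥0∞) : l * ∫⁻ y, f y ∂φ ≤ ∫⁻ y, f y ∂μ := by
  rw [← smul_eq_mul, ← lintegral_smul_measure]
  exact lintegral_mono' h le_rfl

theorem phi_v_bound_m_step_general
    {S : Type*} [MeasurableSpace S]
    (P : Kernel S S) [IsMarkovKernel P]
    (C : Set S) (x₀ : S) (hx₀ : x₀ ∈ C)
    (φ : Measure S)
    (l : ℝ≥0∞) (hl0 : 0 < l)
    (m : ℕ)
    (v : S → ℝ≥0) (hv : Measurable v) (b : ℝ≥0)
    (hdrift : ∀ x, ∫⁻ y, (v y : ℝ≥0∞) ∂(P x) ≤ (v x : ℝ≥0∞) + b)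
    (hminor : ∀ x ∈ C, ∀ A : Set S, MeasurableSet A → l * φ A ≤ (kernelIter P m) x A) :
    ∫⁻ y, (v y : ℝ≥0∞) ∂φ ≤ ((v x₀ : ℝ≥0∞) + m * b) / l := by
  have hle : l • φ ≤ kernelIter P m x₀ :=
    Measure.le_iff.2 fun A hA => by simpa using hminor x₀ hx₀ A hA
  have hiter := lintegral_kernelIter_le_add_mul P hv.coe_nnreal_ennreal hdrift m x₀
  have hfinite : (v x₀ : ℝ≥0∞) + m * b ≠ ⊤ := by finiteness
  rw [ENNReal.le_div_iff_mul_le (Or.inl hl0.ne') (Or.inr hfinite), mul_comm]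
  exact (mul_lintegral_le_of_smul_le hle _).trans hiter

/-- If `Pv ≤ v + b` and the `m`-step minorization `P^m(x,·) ≥ λφ(·)` holds on `C`
with `x₀ ∈ C`, then `φ v ≤ (v(x₀) + m·b)/λ`. -/
theorem phi_v_bound_m_step
    {S : Type*} [MeasurableSpace S]
    (P : Kernel S S) [IsMarkovKernel P]
    (C : Set S) (x₀ : S) (hx₀ : x₀ ∈ C)
    (φ : Measure S) [IsProbabilityMeasure φ]
    (l : ℝ≥0∞) (hl0 : 0 < l) (hl1 : l ≤ 1)
    (m : ℕ) (hm : 1 ≤ m)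
    (v : S → ℝ≥0) (hv : Measurable v) (b : ℝ≥0)
    (hdrift : ∀ x, ∫⁻ y, (v y : ℝ≥0∞) ∂(P x) ≤ (v x : ℝ≥0∞) + b)
    (hminor : ∀ x ∈ C, ∀ A : Set S, MeasurableSet A → l * φ A ≤ (kernelIter P m) x A) :
    ∫⁻ y, (v y : ℝ≥0∞) ∂φ ≤ ((v x₀ : ℝ≥0∞) + m * b) / l :=
  phi_v_bound_m_step_general P C x₀ hx₀ φ l hl0 m v hv b hdrift hminor
end

section
/- Let (X_n) be a Markov chain with kernel P started from initial distribution φ, and let τ be a randomized stopping time such that X_τ is distributed φ and E_φ τ < ∞. Define the occupation measure ν(A) = E_φ[∑_{j=0}^{τ−1} 1(X_j ∈ A)] / E_φ τ. Then ν is a probability measure satisfying νP = ν, i.e., ν is stationary for P. -/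
/-!
Write `ν = ∑_j law(X_j; j < τ)` for the unnormalised occupation measure. Counting the path
`X_0, …, X_τ` once from the front and once from the back gives
`ν + law(X_τ) = law(X_0) + ∑_j law(X_{j+1}; j < τ)`, and since `{j < τ}` is `ℱ_j`-measurable the
Markov property identifies the last sum with `νP`. As `X_0` and `X_τ` both have the finite law `φ`,
it cancels and `νP = ν`; the total mass of `ν` is `∑_j P(j < τ) = E τ ∈ [1, ∞)`.
-/

open MeasureTheory ProbabilityTheory
open scoped ENNReal

theorem MeasureTheory.Measure.sum_nat_eq_add_sum_succ {α : Type*} [MeasurableSpace α]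
    (m : ℕ → Measure α) : Measure.sum m = m 0 + Measure.sum fun n => m (n + 1) := by
  ext s hs
  simp only [Measure.add_apply, Measure.sum_apply _ hs]
  exact tsum_eq_zero_add' ENNReal.summable

theorem MeasureTheory.Measure.bind_map_eq_map_of_lintegral_comp_eq {Ω S T : Type*}
    [MeasurableSpace Ω] [MeasurableSpace S] [MeasurableSpace T] {μ : Measure Ω}
    {P : Kernel S T} {Y : Ω → S} {Z : Ω → T} (hY : Measurable Y) (hZ : Measurable Z)
    (h : ∀ g : T → ℝ≥0∞, Measurable g → ∫⁻ ω, g (Z ω) ∂μ = ∫⁻ ω, ∫⁻ y, g y ∂P (Y ω) ∂μ) :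
    (μ.map Y).bind P = μ.map Z := by
  ext s hs
  have hg : Measurable (s.indicator (1 : T → ℝ≥0∞)) := measurable_one.indicator hs
  calc ((μ.map Y).bind P) s = ∫⁻ ω, ∫⁻ y, s.indicator 1 y ∂P (Y ω) ∂μ := by
        simp_rw [Measure.bind_apply hs P.aemeasurable, lintegral_map (P.measurable_coe hs) hY,
          lintegral_indicator_one hs]
    _ = ∫⁻ ω, s.indicator 1 (Z ω) ∂μ := (h _ hg).symm
    _ = μ.map Z s := by rw [← lintegral_map hg hZ, lintegral_indicator_one hs]

theorem MeasureTheory.lintegral_natCast_eq_tsum_measure_lt {Ω : Type*} [MeasurableSpace Ω]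
    (μ : Measure Ω) {τ : Ω → ℕ} (hτ : Measurable τ) :
    ∫⁻ ω, (τ ω : ℝ≥0∞) ∂μ = ∑' j : ℕ, μ {ω | j < τ ω} := by
  have hmeas : ∀ j : ℕ, MeasurableSet {ω | j < τ ω} := fun j => measurableSet_lt measurable_const hτ
  have hcount : ∀ ω, (τ ω : ℝ≥0∞) = ∑' j : ℕ, {ω | j < τ ω}.indicator 1 ω := fun ω => by
    rw [tsum_eq_sum (s := Finset.range (τ ω)) (fun j hj => by simp_all)]
    simp [Set.indicator_apply, Finset.filter_true_of_mem fun j => Finset.mem_range.mp]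
  simp_rw [hcount, ← lintegral_indicator_one (hmeas _)]
  exact lintegral_tsum fun j => (measurable_one.indicator (hmeas j)).aemeasurable

theorem MeasureTheory.Measure.restrict_le_eq_restrict_lt_add_restrict_eq {Ω ι : Type*}
    [MeasurableSpace Ω] [LinearOrder ι] [MeasurableSpace ι] [MeasurableSingletonClass ι]
    {μ : Measure Ω} {τ : Ω → ι} (hτ : Measurable τ) (j : ι) :
    μ.restrict {ω | j ≤ τ ω} = μ.restrict {ω | j < τ ω} + μ.restrict {ω | τ ω = j} := by
  rw [← Measure.restrict_union (t := {ω | τ ω = j}) _ (hτ (measurableSet_singleton j))]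
  · congr 1 with ω
    simp [le_iff_lt_or_eq, eq_comm]
  · exact Set.disjoint_left.2 fun ω h h' => (ne_of_gt h) h'

section Occupation

variable {Ω S : Type*} [MeasurableSpace Ω] [MeasurableSpace S] {μ : Measure Ω}
  {X : ℕ → Ω → S} {τ : Ω → ℕ}

noncomputable def occupationMeasure (μ : Measure Ω) (X : ℕ → Ω → S) (τ : Ω → ℕ) : Measure S :=
  Measure.sum fun j => (μ.restrict {ω | j < τ ω}).map (X j)

theorem occupationMeasure_univ (hX : ∀ n, Measurable (X n)) (hτ : Measurable τ) :
    occupationMeasure μ X τ Set.univ = ∫⁻ ω, (τ ω : ℝ≥0∞) ∂μ := by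
  simp [occupationMeasure, Measure.map_apply (hX _) MeasurableSet.univ,
    lintegral_natCast_eq_tsum_measure_lt μ hτ]

theorem map_stopped_eq_sum_map_restrict (hX : ∀ n, Measurable (X n)) (hτ : Measurable τ) :
    μ.map (fun ω => X (τ ω) ω) = Measure.sum fun k => (μ.restrict {ω | τ ω = k}).map (X k) := by
  have hXτ : Measurable fun ω => X (τ ω) ω :=
    (measurable_from_prod_countable_left (f := fun p : Ω × ℕ => X p.2 p.1) hX).comp
      (measurable_id.prodMk hτ)
  have hpart : μ = Measure.sum fun k => μ.restrict {ω | τ ω = k} := by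
    rw [← Measure.restrict_iUnion (fun i j hij => Set.disjoint_left.2 fun ω hi hj => hij (hi ▸ hj))
      fun k => measurableSet_eq_fun hτ measurable_const,
      Set.iUnion_eq_univ_iff.2 fun ω => ⟨τ ω, rfl⟩, Measure.restrict_univ]
  conv_lhs => rw [hpart]
  rw [Measure.map_sum hXτ.aemeasurable]
  refine Measure.sum_congr fun k => Measure.map_congr ?_
  filter_upwards [ae_restrict_mem (measurableSet_eq_fun hτ measurable_const)] with ω hω
  rw [hω]

theorem occupationMeasure_add_map_stopped (hX : ∀ n, Measurable (X n)) (hτ : Measurable τ) :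
    occupationMeasure μ X τ + μ.map (fun ω => X (τ ω) ω) =
      μ.map (X 0) + Measure.sum fun j => (μ.restrict {ω | j < τ ω}).map (X (j + 1)) := by
  have hsplit : ∀ j, (μ.restrict {ω | j ≤ τ ω}).map (X j) =
      (μ.restrict {ω | j < τ ω}).map (X j) + (μ.restrict {ω | τ ω = j}).map (X j) := fun j => by
    rw [Measure.restrict_le_eq_restrict_lt_add_restrict_eq hτ, Measure.map_add _ _ (hX j)]
  have hstart : μ.map (X 0) = (μ.restrict {ω | 0 ≤ τ ω}).map (X 0) := by simp
  have hstep : ∀ j, (μ.restrict {ω | j < τ ω}).map (X (j + 1)) =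
      (μ.restrict {ω | j + 1 ≤ τ ω}).map (X (j + 1)) := fun j => by simp only [Nat.add_one_le_iff]
  rw [occupationMeasure, map_stopped_eq_sum_map_restrict hX hτ, Measure.sum_nat_eq_add_sum_succ,
    Measure.sum_nat_eq_add_sum_succ (fun k => (μ.restrict {ω | τ ω = k}).map (X k)), hstart,
    hsplit, Measure.sum_congr fun j => (hstep j).trans (hsplit (j + 1)), ← Measure.sum_add_sum]
  abel

theorem occupationMeasure_bind {P : Kernel S S} {ℱ : Filtration ℕ ‹MeasurableSpace Ω›}
    (hX : ∀ n, Measurable (X n))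
    (hMarkov : ∀ (n : ℕ) (g : S → ℝ≥0∞), Measurable g →
      ∀ A : Set Ω, MeasurableSet[ℱ n] A →
        ∫⁻ ω in A, g (X (n + 1) ω) ∂μ = ∫⁻ ω in A, (∫⁻ y, g y ∂(P (X n ω))) ∂μ)
    (hτ : IsStoppingTime ℱ (fun ω => (τ ω : WithTop ℕ))) :
    (occupationMeasure μ X τ).bind P =
      Measure.sum fun j => (μ.restrict {ω | j < τ ω}).map (X (j + 1)) := by
  rw [occupationMeasure, Measure.bind_sum _ _ P.aemeasurable]
  refine Measure.sum_congr fun j => ?_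
  refine Measure.bind_map_eq_map_of_lintegral_comp_eq (hX j) (hX (j + 1)) fun g hg => ?_
  exact hMarkov j g hg _ (by simpa using hτ.measurableSet_gt j)

end Occupation

theorem occupation_measure_stationary_general
    {Ω S : Type*} [mΩ : MeasurableSpace Ω] [MeasurableSpace S]
    (μ : Measure Ω) [IsProbabilityMeasure μ]
    (P : Kernel S S)
    (X : ℕ → Ω → S) (hX : ∀ n, Measurable (X n))
    (ℱ : Filtration ℕ mΩ)
    (hMarkov : ∀ (n : ℕ) (g : S → ℝ≥0∞), Measurable g →
      ∀ A : Set Ω, MeasurableSet[ℱ n] A →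
        ∫⁻ ω in A, g (X (n + 1) ω) ∂μ = ∫⁻ ω in A, (∫⁻ y, g y ∂(P (X n ω))) ∂μ)
    (τ : Ω → ℕ) (hτ : IsStoppingTime ℱ (fun ω => (τ ω : WithTop ℕ))) (hτ1 : ∀ ω, 1 ≤ τ ω)
    (φ : Measure S) [IsProbabilityMeasure φ]
    (h0 : Measure.map (X 0) μ = φ)
    (hτlaw : Measure.map (fun ω => X (τ ω) ω) μ = φ)
    (hEτ : ∫⁻ ω, (τ ω : ℝ≥0∞) ∂μ < ⊤) :
    IsProbabilityMeasure
      ((∫⁻ ω, (τ ω : ℝ≥0∞) ∂μ)⁻¹ •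
        Measure.sum (fun j : ℕ => (μ.restrict {ω | j < τ ω}).map (X j))) ∧
    ((∫⁻ ω, (τ ω : ℝ≥0∞) ∂μ)⁻¹ •
        Measure.sum (fun j : ℕ => (μ.restrict {ω | j < τ ω}).map (X j))).bind (fun y => P y)
      = (∫⁻ ω, (τ ω : ℝ≥0∞) ∂μ)⁻¹ •
        Measure.sum (fun j : ℕ => (μ.restrict {ω | j < τ ω}).map (X j)) := by
  change IsProbabilityMeasure (_ • occupationMeasure μ X τ) ∧
    (_ • occupationMeasure μ X τ).bind P = _ • occupationMeasure μ X τ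
  have hτm : Measurable τ := measurable_to_countable' fun k => by
    simpa [Set.preimage] using ℱ.le k _ (hτ.measurableSet_eq k)
  have hE1 : 1 ≤ ∫⁻ ω, (τ ω : ℝ≥0∞) ∂μ := by
    simpa using lintegral_mono (μ := μ) fun ω => Nat.one_le_cast.2 (hτ1 ω)
  have hstat : (occupationMeasure μ X τ).bind P = occupationMeasure μ X τ := by
    have h := occupationMeasure_add_map_stopped (μ := μ) hX hτm
    rwa [← occupationMeasure_bind hX hMarkov hτ, hτlaw, h0, add_comm φ,
      Measure.add_left_inj, eq_comm] at h
  refine ⟨⟨?_⟩, by rw [Measure.bind_smul, hstat]⟩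
  rw [Measure.smul_apply, occupationMeasure_univ hX hτm, smul_eq_mul]
  exact ENNReal.inv_mul_cancel (one_pos.trans_le hE1).ne' hEτ.ne

/-- For a Markov chain `X` with kernel `P` started from `φ`, and a (randomized)
stopping time `τ` (w.r.t. a possibly enlarged filtration `ℱ` for which the Markov
property still holds) such that `X_τ ~ φ` and `1 ≤ E_φ τ < ∞`, the occupation
measure `ν(A) = E_φ[∑_{j<τ} 1(X_j ∈ A)] / E_φ τ` is a stationary probability
measure for `P`. -/
theorem occupation_measure_stationary
    {Ω S : Type*} [mΩ : MeasurableSpace Ω] [MeasurableSpace S]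
    (μ : Measure Ω) [IsProbabilityMeasure μ]
    (P : Kernel S S) [IsMarkovKernel P]
    (X : ℕ → Ω → S) (hX : ∀ n, Measurable (X n))
    (ℱ : Filtration ℕ mΩ) (hadapt : ∀ n, Measurable[ℱ n] (X n))
    (hMarkov : ∀ (n : ℕ) (g : S → ℝ≥0∞), Measurable g →
      ∀ A : Set Ω, MeasurableSet[ℱ n] A →
        ∫⁻ ω in A, g (X (n + 1) ω) ∂μ = ∫⁻ ω in A, (∫⁻ y, g y ∂(P (X n ω))) ∂μ)
    (τ : Ω → ℕ) (hτ : IsStoppingTime ℱ (fun ω => (τ ω : WithTop ℕ))) (hτ1 : ∀ ω, 1 ≤ τ ω)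
    (φ : Measure S) [IsProbabilityMeasure φ]
    (h0 : Measure.map (X 0) μ = φ)
    (hτlaw : Measure.map (fun ω => X (τ ω) ω) μ = φ)
    (hEτ : ∫⁻ ω, (τ ω : ℝ≥0∞) ∂μ < ⊤) :
    IsProbabilityMeasure
      ((∫⁻ ω, (τ ω : ℝ≥0∞) ∂μ)⁻¹ •
        Measure.sum (fun j : ℕ => (μ.restrict {ω | j < τ ω}).map (X j))) ∧
    ((∫⁻ ω, (τ ω : ℝ≥0∞) ∂μ)⁻¹ •
        Measure.sum (fun j : ℕ => (μ.restrict {ω | j < τ ω}).map (X j))).bind (fun y => P y)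
      = (∫⁻ ω, (τ ω : ℝ≥0∞) ∂μ)⁻¹ •
        Measure.sum (fun j : ℕ => (μ.restrict {ω | j < τ ω}).map (X j)) :=
  occupation_measure_stationary_general (mΩ := mΩ) μ P X hX ℱ hMarkov τ hτ hτ1 φ h0 hτlaw hEτ
end

section
/- Let (a*_n), (b*_n) be real sequences and (p_j)_{j≥1} a probability sequence with a*_n = b*_n + ∑_{j=1}^n a*_{n−j} p_j for all n. If (b*_n) is absolutely summable, then a*_n = ∑_{j=0}^n b*_{n−j} u_j where (u_j) is the associated renewal sequence, and (a*_n) is bounded: |a*_n| ≤ ∑_{j=0}^∞ |b*_j|. -/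
/-!
With generating functions `A, B, P, U` of `a, b, p, u`, the two recursions read
`A = B + P * A` and `U = 1 + P * U`, so `A = A * (U - P * U) = (A - P * A) * U = B * U`.
Since `∑ p_j ≤ 1`, induction gives `0 ≤ u_n ≤ 1`, and then `|a_n| ≤ ∑_{j ≤ n} |b_j|`.
-/

open Finset PowerSeries

theorem PowerSeries.coeff_mk_mul_mk {R : Type*} [Semiring R] (q a : ℕ → R) (n : ℕ) :
    coeff n (mk q * mk a) = ∑ j ∈ range (n + 1), q j * a (n - j) := by
  rw [coeff_mul, Nat.sum_antidiagonal_eq_sum_range_succ (fun i j => coeff i (mk q) * coeff j (mk a))]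
  simp only [coeff_mk]

theorem PowerSeries.coeff_mk_mul_mk_of_apply_zero {R : Type*} [Semiring R] {q : ℕ → R}
    (hq : q 0 = 0) (a : ℕ → R) (n : ℕ) :
    coeff n (mk q * mk a) = ∑ j ∈ Icc 1 n, q j * a (n - j) := by
  rw [coeff_mk_mul_mk, sum_range_succ', hq, zero_mul, add_zero, range_eq_Ico,
    sum_Ico_add' (fun j => q j * a (n - j)), zero_add, Ico_add_one_right_eq_Icc]

theorem renewal_equation_solution {R : Type*} [CommRing R] {a b p u : ℕ → R} (hp0 : p 0 = 0)
    (hu0 : u 0 = 1) (hu : ∀ n, 1 ≤ n → u n = ∑ j ∈ Icc 1 n, p j * u (n - j))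
    (hren : ∀ n, a n = b n + ∑ j ∈ Icc 1 n, a (n - j) * p j) (n : ℕ) :
    a n = ∑ j ∈ range (n + 1), b (n - j) * u j := by
  have hA : mk a = mk b + mk p * mk a := by
    ext n
    rw [map_add, coeff_mk_mul_mk_of_apply_zero hp0, coeff_mk, coeff_mk, hren n]
    simp only [mul_comm]
  have hU : mk u = 1 + mk p * mk u := by
    ext (_ | n)
    · simp [hu0, hp0]
    · rw [map_add, coeff_mk_mul_mk_of_apply_zero hp0, coeff_mk, hu (n + 1) n.succ_pos, coeff_one,
        if_neg n.succ_ne_zero, zero_add]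
  have hAU : mk a = mk u * mk b := by linear_combination mk u * hA - mk a * hU
  rw [← coeff_mk n a, hAU, coeff_mk_mul_mk]
  simp only [mul_comm]

theorem renewal_sequence_mem_Icc {p u : ℕ → ℝ} (hp : ∀ j, 0 ≤ p j)
    (hp_le : ∀ n, ∑ j ∈ Icc 1 n, p j ≤ 1) (hu0 : u 0 = 1)
    (hu : ∀ n, 1 ≤ n → u n = ∑ j ∈ Icc 1 n, p j * u (n - j)) (n : ℕ) :
    u n ∈ Set.Icc 0 1 := by
  induction n using Nat.strong_induction_on with
  | _ n ih =>
  rcases Nat.eq_zero_or_pos n with rfl | hn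
  · simp [hu0]
  have hterm : ∀ j ∈ Icc 1 n, p j * u (n - j) ∈ Set.Icc 0 (p j) := fun j hj =>
    have hmem := ih (n - j) (by grind)
    ⟨mul_nonneg (hp j) hmem.1, mul_le_of_le_one_right (hp j) hmem.2⟩
  rw [hu n hn]
  exact ⟨sum_nonneg fun j hj => (hterm j hj).1,
    (sum_le_sum fun j hj => (hterm j hj).2).trans (hp_le n)⟩

theorem abs_sum_mul_le_tsum_abs {b u : ℕ → ℝ} (hu : ∀ j, |u j| ≤ 1)
    (hb : Summable fun n => |b n|) (n : ℕ) :
    |∑ j ∈ range (n + 1), b (n - j) * u j| ≤ ∑' j, |b j| :=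
  calc |∑ j ∈ range (n + 1), b (n - j) * u j|
      ≤ ∑ j ∈ range (n + 1), |b (n - j)| := by
        refine (abs_sum_le_sum_abs _ _).trans (sum_le_sum fun j _ => ?_)
        rw [abs_mul]
        exact mul_le_of_le_one_right (abs_nonneg _) (hu j)
    _ = ∑ j ∈ range (n + 1), |b j| := sum_range_reflect (fun j => |b j|) (n + 1)
    _ ≤ ∑' j, |b j| := hb.sum_le_tsum _ fun j _ => abs_nonneg _

/-- Signed renewal equation: if `a_n = b_n + ∑_{j=1}^n a_{n-j} p_j` with `(p_j)` a
sub-probability sequence and `(b_n)` absolutely summable, then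
`a_n = ∑_{j=0}^n b_{n-j} u_j` and `|a_n| ≤ ∑_j |b_j|` for all `n`. -/
theorem signed_renewal_equation_bounded
    (a b p u : ℕ → ℝ)
    (hp : ∀ j, 0 ≤ p j) (hp0 : p 0 = 0)
    (hpsummable : Summable p) (hptsum : ∑' j, p j ≤ 1)
    (hu0 : u 0 = 1)
    (hu : ∀ n, 1 ≤ n → u n = ∑ j ∈ Finset.Icc 1 n, p j * u (n - j))
    (hren : ∀ n, a n = b n + ∑ j ∈ Finset.Icc 1 n, a (n - j) * p j)
    (habs : Summable (fun n => |b n|)) :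
    (∀ n, a n = ∑ j ∈ Finset.range (n + 1), b (n - j) * u j) ∧
    (∀ n, |a n| ≤ ∑' j, |b j|) := by
  have hsol := renewal_equation_solution hp0 hu0 hu hren
  have hu_mem : ∀ n, u n ∈ Set.Icc 0 1 := renewal_sequence_mem_Icc hp
    (fun n => (hpsummable.sum_le_tsum _ fun j _ => hp j).trans hptsum) hu0 hu
  refine ⟨hsol, fun n => ?_⟩
  rw [hsol n]
  exact abs_sum_mul_le_tsum_abs (fun j => (abs_of_nonneg (hu_mem j).1).trans_le (hu_mem j).2)
    habs n
end

section
/- Suppose a Markov chain (X_n) with kernel P admits a randomized stopping time τ ≥ 1 such that (X_0,…,X_{τ−1},τ) is independent of (X_τ, X_{τ+1},…) and the post-τ process has law P_φ for a probability measure φ. If M_f := E_φ[∑_{j=0}^{τ−1} f(X_j)] < ∞ for a nonnegative measurable f, then sup_{n≥0} E_φ f(X_n) ≤ M_f. -/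
/-!
Write `u n = E f(X n)`, `a j = E[f(X j); j < τ]` and `p k = P(τ = k)`. Splitting `E f(X n)` according
to whether `n < τ` or `τ = k ≤ n`, and using that on `{τ = k}` the value `X n` is coordinate `n - k`
of the post-`τ` process, which is independent of `τ` and distributed like the chain, gives the
renewal equation `u n = a n + ∑_{k=1}^n p k * u (n - k)`. As `∑ p k ≤ 1`, strong induction yields
`u n ≤ ∑_{j ≤ n} a j ≤ ∑_j a j = M_f`.
-/

open MeasureTheory ProbabilityTheory
open scoped ENNReal

theorem le_sum_range_succ_of_le_add_sum_mul {u a p : ℕ → ℝ≥0∞}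
    (hp : ∀ n, ∑ k ∈ Finset.Icc 1 n, p k ≤ 1)
    (hu : ∀ n, u n ≤ a n + ∑ k ∈ Finset.Icc 1 n, p k * u (n - k)) (n : ℕ) :
    u n ≤ ∑ j ∈ Finset.range (n + 1), a j := by
  induction n using Nat.strong_induction_on with
  | _ n ih =>
    have hpast : ∀ k ∈ Finset.Icc 1 n, u (n - k) ≤ ∑ j ∈ Finset.range n, a j := by
      intro k hk
      have ⟨hk1, hkn⟩ := Finset.mem_Icc.mp hk
      exact (ih _ (by omega)).trans (Finset.sum_le_sum_of_subset (Finset.range_mono (by omega)))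
    calc u n ≤ a n + ∑ k ∈ Finset.Icc 1 n, p k * ∑ j ∈ Finset.range n, a j := by
          grw [hu n]
          gcongr with k hk
          exact hpast k hk
      _ = a n + (∑ k ∈ Finset.Icc 1 n, p k) * ∑ j ∈ Finset.range n, a j := by
          rw [Finset.sum_mul]
      _ ≤ a n + ∑ j ∈ Finset.range n, a j := by grw [hp n, one_mul]
      _ = ∑ j ∈ Finset.range (n + 1), a j := by rw [Finset.sum_range_succ, add_comm]

theorem measurable_apply_index_of_countable {Ω ι β : Type*} [MeasurableSpace Ω]
    [MeasurableSpace ι] [Countable ι] [MeasurableSingletonClass ι] [MeasurableSpace β]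
    {F : ι → Ω → β} (hF : ∀ i, Measurable (F i)) {τ : Ω → ι} (hτ : Measurable τ) :
    Measurable fun ω => F (τ ω) ω :=
  (measurable_from_prod_countable_left (f := fun p : Ω × ι => F p.2 p.1) hF).comp
    (measurable_id.prodMk hτ)

theorem ProbabilityTheory.IndepFun.setLIntegral_preimage_eq_mul {Ω β γ : Type*}
    [MeasurableSpace Ω] [MeasurableSpace β] [MeasurableSpace γ] {μ : Measure Ω}
    {Y : Ω → β} {Z : Ω → γ} (hYZ : IndepFun Y Z μ) (hY : Measurable Y) (hZ : Measurable Z)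
    {s : Set β} (hs : MeasurableSet s) {g : γ → ℝ≥0∞} (hg : Measurable g) :
    ∫⁻ ω in Y ⁻¹' s, g (Z ω) ∂μ = μ (Y ⁻¹' s) * ∫⁻ ω, g (Z ω) ∂μ := by
  have h1s : Measurable (s.indicator (1 : β → ℝ≥0∞)) := measurable_const.indicator hs
  calc ∫⁻ ω in Y ⁻¹' s, g (Z ω) ∂μ = ∫⁻ ω, s.indicator 1 (Y ω) * g (Z ω) ∂μ := by
        rw [← lintegral_indicator (hY hs)]
        congr with ω
        by_cases hω : Y ω ∈ s <;> simp [hω]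
    _ = (∫⁻ ω, s.indicator 1 (Y ω) ∂μ) * ∫⁻ ω, g (Z ω) ∂μ :=
        lintegral_mul_eq_lintegral_mul_lintegral_of_indepFun'' (h1s.comp hY).aemeasurable
          (hg.comp hZ).aemeasurable (hYZ.comp h1s hg)
    _ = μ (Y ⁻¹' s) * ∫⁻ ω, g (Z ω) ∂μ := by
        rw [← lintegral_indicator_one (hY hs)]
        rfl

section

variable {Ω : Type*} [MeasurableSpace Ω] {μ : Measure Ω} {τ : Ω → ℕ}

theorem lintegral_eq_setLIntegral_lt_add_sum_setLIntegral_eq (hτ : Measurable τ)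
    (hτ1 : ∀ ω, 1 ≤ τ ω) (g : Ω → ℝ≥0∞) (n : ℕ) :
    ∫⁻ ω, g ω ∂μ = ∫⁻ ω in {ω | n < τ ω}, g ω ∂μ
      + ∑ k ∈ Finset.Icc 1 n, ∫⁻ ω in {ω | τ ω = k}, g ω ∂μ := by
  have hcompl : {ω | n < τ ω}ᶜ = ⋃ k ∈ Finset.Icc 1 n, {ω | τ ω = k} := by
    ext ω
    simp [hτ1 ω]
  rw [← lintegral_add_compl g (measurableSet_lt measurable_const hτ), hcompl,
    lintegral_biUnion_finset (t := fun k => {ω | τ ω = k}) _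
      fun k _ => hτ (measurableSet_singleton k)]
  exact fun i _ j _ hij => Set.disjoint_left.mpr fun ω hi hj => hij (hi.symm.trans hj)

theorem lintegral_sum_range_eq_tsum_setLIntegral (hτ : Measurable τ) {g : ℕ → Ω → ℝ≥0∞}
    (hg : ∀ j, Measurable (g j)) :
    ∫⁻ ω, ∑ j ∈ Finset.range (τ ω), g j ω ∂μ = ∑' j, ∫⁻ ω in {ω | j < τ ω}, g j ω ∂μ := by
  have hlt : ∀ j, MeasurableSet {ω | j < τ ω} := fun j => measurableSet_lt measurable_const hτ
  simp_rw [← lintegral_indicator (hlt _)]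
  rw [← lintegral_tsum fun j => ((hg j).indicator (hlt j)).aemeasurable]
  congr with ω
  rw [sum_eq_tsum_indicator]
  congr with j
  simp [Set.indicator_apply]

end

theorem lintegral_eq_setLIntegral_lt_add_sum_mul_of_regeneration {Ω S : Type*}
    [MeasurableSpace Ω] [MeasurableSpace S] {μ : Measure Ω} {X : ℕ → Ω → S}
    (hX : ∀ n, Measurable (X n)) {τ : Ω → ℕ} (hτ : Measurable τ) (hτ1 : ∀ ω, 1 ≤ τ ω)
    (hindep : IndepFun τ (fun ω => (fun n => X (τ ω + n) ω : ℕ → S)) μ)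
    (hpostlaw : Measure.map (fun ω => (fun n => X (τ ω + n) ω : ℕ → S)) μ
      = Measure.map (fun ω => (fun n => X n ω : ℕ → S)) μ)
    {f : S → ℝ≥0∞} (hf : Measurable f) (n : ℕ) :
    ∫⁻ ω, f (X n ω) ∂μ = ∫⁻ ω in {ω | n < τ ω}, f (X n ω) ∂μ
      + ∑ k ∈ Finset.Icc 1 n, μ {ω | τ ω = k} * ∫⁻ ω, f (X (n - k) ω) ∂μ := by
  have hpost : Measurable fun ω => (fun n => X (τ ω + n) ω : ℕ → S) :=
    measurable_pi_lambda _ fun m => measurable_apply_index_of_countable (fun k => hX (k + m)) hτ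
  have hpath : Measurable fun ω => (fun n => X n ω : ℕ → S) := measurable_pi_lambda _ hX
  rw [lintegral_eq_setLIntegral_lt_add_sum_setLIntegral_eq hτ hτ1]
  congr 1
  refine Finset.sum_congr rfl fun k hk => ?_
  have hfm : Measurable fun x : ℕ → S => f (x (n - k)) := hf.comp (measurable_pi_apply _)
  calc ∫⁻ ω in {ω | τ ω = k}, f (X n ω) ∂μ
      = ∫⁻ ω in {ω | τ ω = k}, f (X (τ ω + (n - k)) ω) ∂μ := by
        refine setLIntegral_congr_fun (hτ (measurableSet_singleton k)) fun ω (hω : τ ω = k) => ?_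
        rw [hω, Nat.add_sub_cancel' (Finset.mem_Icc.mp hk).2]
    _ = μ {ω | τ ω = k} * ∫⁻ ω, f (X (τ ω + (n - k)) ω) ∂μ :=
        hindep.setLIntegral_preimage_eq_mul hτ hpost (measurableSet_singleton k) hfm
    _ = μ {ω | τ ω = k} * ∫⁻ ω, f (X (n - k) ω) ∂μ := by
        rw [← lintegral_map hfm hpost, hpostlaw, lintegral_map hfm hpath]

theorem marginal_expectation_bound_general
    {Ω S : Type*} [MeasurableSpace Ω] [MeasurableSpace S]
    (μ : Measure Ω) [IsProbabilityMeasure μ]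
    (X : ℕ → Ω → S) (hX : ∀ n, Measurable (X n))
    (τ : Ω → ℕ) (hτ : Measurable τ) (hτ1 : ∀ ω, 1 ≤ τ ω)
    (hindep : IndepFun
      (fun ω => ((fun i => X (min i (τ ω)) ω, τ ω) : (ℕ → S) × ℕ))
      (fun ω => (fun n => X (τ ω + n) ω : ℕ → S)) μ)
    (hpostlaw : Measure.map (fun ω => (fun n => X (τ ω + n) ω : ℕ → S)) μ
      = Measure.map (fun ω => (fun n => X n ω : ℕ → S)) μ)
    (f : S → ℝ≥0∞) (hf : Measurable f) :
    ⨆ n : ℕ, ∫⁻ ω, f (X n ω) ∂μ ≤ ∫⁻ ω, ∑ j ∈ Finset.range (τ ω), f (X j ω) ∂μ := by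
  have hrenewal := lintegral_eq_setLIntegral_lt_add_sum_mul_of_regeneration hX hτ hτ1
    (hindep.comp measurable_snd measurable_id) hpostlaw hf
  have hmass (n : ℕ) : ∑ k ∈ Finset.Icc 1 n, μ {ω | τ ω = k} ≤ 1 :=
    (sum_measure_preimage_singleton _ fun k _ => hτ (measurableSet_singleton k)).trans_le
      prob_le_one
  rw [lintegral_sum_range_eq_tsum_setLIntegral (g := fun j ω => f (X j ω)) hτ
    fun j => hf.comp (hX j)]
  exact iSup_le fun n => (le_sum_range_succ_of_le_add_sum_mul hmass
    (fun m => (hrenewal m).le) n).trans (ENNReal.sum_le_tsum _)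

/-- Wide-sense regeneration bound on marginal expectations: if `τ ≥ 1` is a randomized
stopping time such that the pre-`τ` segment (with `τ`) is independent of the post-`τ`
process, the post-`τ` process has the same law as the chain itself (started at `φ`),
and `M_f = E_φ ∑_{j<τ} f(X_j) < ∞`, then `sup_n E_φ f(X_n) ≤ M_f`. -/
theorem marginal_expectation_bound
    {Ω S : Type*} [MeasurableSpace Ω] [MeasurableSpace S]
    (μ : Measure Ω) [IsProbabilityMeasure μ]
    (X : ℕ → Ω → S) (hX : ∀ n, Measurable (X n))
    (τ : Ω → ℕ) (hτ : Measurable τ) (hτ1 : ∀ ω, 1 ≤ τ ω)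
    (φ : Measure S) [IsProbabilityMeasure φ]
    (h0 : Measure.map (X 0) μ = φ)
    (hindep : IndepFun
      (fun ω => ((fun i => X (min i (τ ω)) ω, τ ω) : (ℕ → S) × ℕ))
      (fun ω => (fun n => X (τ ω + n) ω : ℕ → S)) μ)
    (hpostlaw : Measure.map (fun ω => (fun n => X (τ ω + n) ω : ℕ → S)) μ
      = Measure.map (fun ω => (fun n => X n ω : ℕ → S)) μ)
    (f : S → ℝ≥0∞) (hf : Measurable f)
    (hM : ∫⁻ ω, ∑ j ∈ Finset.range (τ ω), f (X j ω) ∂μ < ⊤) :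
    ⨆ n : ℕ, ∫⁻ ω, f (X n ω) ∂μ ≤ ∫⁻ ω, ∑ j ∈ Finset.range (τ ω), f (X j ω) ∂μ :=
  marginal_expectation_bound_general μ X hX τ hτ hτ1 hindep hpostlaw f hf
end
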